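/- arXiv:1601.01019 — 2 statements merged into one kernel-verified Lean document; each statement's English description precedes it below -/
import Mathlib

section
/- Let f : ℝⁿ → ℝⁿ be locally Lipschitz, T > 0, and X_T ⊆ ℝⁿ. Suppose v ∈ C¹([0,T] × ℝⁿ), w : ℝⁿ → ℝ continuous, and q ∈ ℝ satisfy: (i) v(T, x) + q ≥ 0 for all x ∈ X_T; (ii) ∂v/∂t + ⟨∇ₓ v, f⟩ ≤ 0 on [0,T] × ℝⁿ; (iii) w(x) - v(0, x) - q ≥ 1 for all x ∈ ℝⁿ. Then every initial condition x₀ whose trajectory satisfies x(T) ∈ X_T obeys w(x₀) ≥ 1; that is, the 1-superlevel set of w contains the backward reachable set of X_T. -/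
/-!
Along a trajectory `x`, the function `t ↦ v (t, x t)` has derivative `∂v/∂t + ⟨∇ₓ v, f⟩`,
which condition (ii) makes nonpositive on `[0, T]`. Hence `v (T, x T) ≤ v (0, x 0)`, and chaining
(i) at `x T ∈ X_T` with (iii) at `x 0` gives `w (x 0) ≥ 1 + v (0, x 0) + q ≥ 1 + v (T, x T) + q ≥ 1`.
-/

open Set

section ValueAlongTrajectory

variable {E : Type*} [NormedAddCommGroup E] [NormedSpace ℝ E]
  {v : ℝ × E → ℝ} {x : ℝ → E}

theorem HasDerivAt.comp_graph {x' : E} {t : ℝ} (hv : DifferentiableAt ℝ v (t, x t))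
    (hx : HasDerivAt x x' t) :
    HasDerivAt (fun s ↦ v (s, x s)) (fderiv ℝ v (t, x t) (1, x')) t :=
  hv.hasFDerivAt.comp_hasDerivAt t ((hasDerivAt_id t).prodMk hx)

theorem antitoneOn_comp_graph_of_fderiv_nonpos {f : E → E} {a b : ℝ}
    (hv : Differentiable ℝ v) (hx : ∀ t, HasDerivAt x (f (x t)) t)
    (hvf : ∀ t ∈ Icc a b, fderiv ℝ v (t, x t) (1, f (x t)) ≤ 0) :
    AntitoneOn (fun t ↦ v (t, x t)) (Icc a b) := by
  have hderiv : ∀ t, HasDerivAt (fun s ↦ v (s, x s)) (fderiv ℝ v (t, x t) (1, f (x t))) t :=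
    fun t ↦ (hx t).comp_graph (hv _)
  refine antitoneOn_of_deriv_nonpos (convex_Icc a b)
    (fun t _ ↦ (hderiv t).continuousAt.continuousWithinAt)
    (fun t _ ↦ (hderiv t).differentiableAt.differentiableWithinAt) fun t ht ↦ ?_
  rw [interior_Icc] at ht
  exact (hderiv t).deriv ▸ hvf t (Ioo_subset_Icc_self ht)

end ValueAlongTrajectory

theorem stmt_5_general {n : ℕ}
    (f : EuclideanSpace ℝ (Fin n) → EuclideanSpace ℝ (Fin n))
    (T : ℝ) (hT : 0 < T) (XT : Set (EuclideanSpace ℝ (Fin n)))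
    (v : ℝ × EuclideanSpace ℝ (Fin n) → ℝ) (hv : ContDiff ℝ 1 v)
    (w : EuclideanSpace ℝ (Fin n) → ℝ) (q : ℝ)
    (hi : ∀ y ∈ XT, v (T, y) + q ≥ 0)
    (hii : ∀ t ∈ Set.Icc (0 : ℝ) T, ∀ y, fderiv ℝ v (t, y) (1, f y) ≤ 0)
    (hiii : ∀ y, w y - v (0, y) - q ≥ 1)
    (x : ℝ → EuclideanSpace ℝ (Fin n))
    (hx : ∀ t, HasDerivAt x (f (x t)) t)
    (hxT : x T ∈ XT) :
    w (x 0) ≥ 1 := by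
  have hdecrease : v (T, x T) ≤ v (0, x 0) :=
    antitoneOn_comp_graph_of_fderiv_nonpos (hv.differentiable one_ne_zero) hx
      (fun t ht ↦ hii t ht (x t)) (left_mem_Icc.2 hT.le) (right_mem_Icc.2 hT.le) hT.le
  linarith [hi (x T) hxT, hiii (x 0)]

/-- dual feasibility implies the 1-superlevel set of w contains the
backward reachable set of X_T (single mode, no uncertainty). -/
theorem stmt_5 {n : ℕ}
    (f : EuclideanSpace ℝ (Fin n) → EuclideanSpace ℝ (Fin n)) (hf : LocallyLipschitz f)
    (T : ℝ) (hT : 0 < T) (XT : Set (EuclideanSpace ℝ (Fin n)))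
    (v : ℝ × EuclideanSpace ℝ (Fin n) → ℝ) (hv : ContDiff ℝ 1 v)
    (w : EuclideanSpace ℝ (Fin n) → ℝ) (hw : Continuous w) (q : ℝ)
    (hi : ∀ y ∈ XT, v (T, y) + q ≥ 0)
    (hii : ∀ t ∈ Set.Icc (0 : ℝ) T, ∀ y, fderiv ℝ v (t, y) (1, f y) ≤ 0)
    (hiii : ∀ y, w y - v (0, y) - q ≥ 1)
    (x : ℝ → EuclideanSpace ℝ (Fin n))
    (hx : ∀ t, HasDerivAt x (f (x t)) t)
    (hxT : x T ∈ XT) :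
    w (x 0) ≥ 1 :=
  stmt_5_general f T hT XT v hv w q hi hii hiii x hx hxT
end

section
/- Let f : ℝⁿ × Θ → ℝⁿ where Θ is a compact set, μ_θ a Borel probability measure on Θ, T > 0, X_T ⊆ ℝⁿ. Suppose v ∈ C¹([0,T] × ℝⁿ × Θ), w continuous, q ∈ ℝ satisfy: (i) v(T, x, θ) + q ≥ 0 for all x ∈ X_T, θ ∈ Θ; (ii) ∂v/∂t + ⟨∇ₓ v, f(x,θ)⟩ ≤ 0 on [0,T] × ℝⁿ × Θ; (iii) w(x) - ∫_Θ v(0, x, θ) dμ_θ(θ) - q ≥ 1 for all x. Then any x₀ such that, for every θ in the support of μ_θ, the solution of ẋ = f(x, θ) from x₀ reaches X_T at time T, satisfies w(x₀) ≥ 1. -/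
/-!
Along a solution `x` of `ẋ = f(x, θ)` condition (ii) makes `t ↦ v(t, x(t), θ)` nonincreasing,
so (i) at the endpoint gives `-q ≤ v(T, x(T), θ) ≤ v(0, x₀, θ)`. This holds for every `θ` in the
support of `μθ`, which is conull, so integrating against the probability measure `μθ` yields
`-q ≤ ∫ v(0, x₀, θ) dμθ`, and (iii) turns this into `w(x₀) ≥ 1`.
-/

open MeasureTheory Set

def measureSupport {α : Type*} [TopologicalSpace α] [MeasurableSpace α]
    (μ : Measure α) : Set α :=
  {x | ∀ U ∈ nhds x, μ U ≠ 0}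

section Support

variable {α : Type*} [TopologicalSpace α] [MeasurableSpace α]

theorem measureSupport_eq_support (μ : Measure α) : measureSupport μ = μ.support := by
  ext x
  simp only [measureSupport, mem_ofPred_eq, Measure.mem_support_iff_forall, pos_iff_ne_zero]

theorem ae_mem_measureSupport [HereditarilyLindelofSpace α] (μ : Measure α) :
    ∀ᵐ x ∂μ, x ∈ measureSupport μ := by
  rw [measureSupport_eq_support]
  exact Measure.support_mem_ae

end Support

section Trajectory

variable {E : Type*} [NormedAddCommGroup E] [NormedSpace ℝ E] {V : ℝ × E → ℝ} {x x' : ℝ → E}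

theorem hasDerivAt_comp_graph {t : ℝ} (hV : DifferentiableAt ℝ V (t, x t))
    (hx : HasDerivAt x (x' t) t) :
    HasDerivAt (fun s => V (s, x s)) (fderiv ℝ V (t, x t) (1, x' t)) t :=
  hV.hasFDerivAt.comp_hasDerivAt t ((hasDerivAt_id t).prodMk hx)

theorem antitoneOn_comp_graph (hV : Differentiable ℝ V) (hx : ∀ t, HasDerivAt x (x' t) t)
    {a b : ℝ} (hneg : ∀ t ∈ Ioo a b, fderiv ℝ V (t, x t) (1, x' t) ≤ 0) :
    AntitoneOn (fun t => V (t, x t)) (Icc a b) := by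
  have hderiv t := hasDerivAt_comp_graph (hV (t, x t)) (hx t)
  refine antitoneOn_of_deriv_nonpos (convex_Icc a b)
    (fun t _ => (hderiv t).continuousAt.continuousWithinAt)
    (fun t _ => (hderiv t).differentiableAt.differentiableWithinAt) fun t ht => ?_
  rw [(hderiv t).deriv]
  exact hneg t (by rwa [interior_Icc] at ht)

end Trajectory

theorem le_integral_of_ae_le {Ω : Type*} [MeasurableSpace Ω] {μ : Measure Ω}
    [IsProbabilityMeasure μ] {g : Ω → ℝ} {c : ℝ} (hg : Integrable g μ) (hc : ∀ᵐ ω ∂μ, c ≤ g ω) :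
    c ≤ ∫ ω, g ω ∂μ := by
  simpa using integral_mono_ae (integrable_const c) hg hc

theorem stmt_6_general {n : ℕ} {Θ : Type*}
    [MetricSpace Θ] [CompactSpace Θ] [MeasurableSpace Θ] [BorelSpace Θ]
    (f : EuclideanSpace ℝ (Fin n) → Θ → EuclideanSpace ℝ (Fin n))
    (μθ : Measure Θ) [IsProbabilityMeasure μθ]
    (T : ℝ) (hT : 0 < T) (XT : Set (EuclideanSpace ℝ (Fin n)))
    (v : ℝ → EuclideanSpace ℝ (Fin n) → Θ → ℝ)
    (hvC : Continuous fun p : (ℝ × EuclideanSpace ℝ (Fin n)) × Θ => v p.1.1 p.1.2 p.2)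
    (hv : ∀ θ, ContDiff ℝ 1 fun p : ℝ × EuclideanSpace ℝ (Fin n) => v p.1 p.2 θ)
    (w : EuclideanSpace ℝ (Fin n) → ℝ) (q : ℝ)
    (hi : ∀ y ∈ XT, ∀ θ, v T y θ + q ≥ 0)
    (hii : ∀ t ∈ Set.Icc (0 : ℝ) T, ∀ y θ,
      fderiv ℝ (fun p : ℝ × EuclideanSpace ℝ (Fin n) => v p.1 p.2 θ) (t, y) (1, f y θ) ≤ 0)
    (hiii : ∀ y, w y - (∫ θ, v 0 y θ ∂μθ) - q ≥ 1)
    (x₀ : EuclideanSpace ℝ (Fin n))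
    (hreach : ∀ θ ∈ measureSupport μθ, ∃ x : ℝ → EuclideanSpace ℝ (Fin n),
      x 0 = x₀ ∧ (∀ t, HasDerivAt x (f (x t) θ) t) ∧ x T ∈ XT) :
    w x₀ ≥ 1 := by
  have hbound : ∀ θ ∈ measureSupport μθ, -q ≤ v 0 x₀ θ := by
    intro θ hθ
    obtain ⟨x, hx0, hx, hxT⟩ := hreach θ hθ
    have hdecr := antitoneOn_comp_graph ((hv θ).differentiable one_ne_zero) hx
      fun t ht => hii t (Ioo_subset_Icc_self ht) (x t) θ
    have hTle : v T (x T) θ ≤ v 0 (x 0) θ :=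
      hdecr (left_mem_Icc.2 hT.le) (right_mem_Icc.2 hT.le) hT.le
    linarith [hi (x T) hxT θ, hx0 ▸ hTle]
  have hcont : Continuous fun θ => v 0 x₀ θ :=
    hvC.comp (f := fun θ => (((0 : ℝ), x₀), θ)) (by fun_prop)
  have hint : Integrable (fun θ => v 0 x₀ θ) μθ :=
    hcont.integrable_of_hasCompactSupport (HasCompactSupport.of_compactSpace _)
  have hmean : -q ≤ ∫ θ, v 0 x₀ θ ∂μθ :=
    le_integral_of_ae_le hint ((ae_mem_measureSupport μθ).mono hbound)
  linarith [hiii x₀]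

/-- single-mode dual outer approximation with a constant uncertain
parameter θ drawn from a probability measure μθ on a compact set Θ: dual feasibility
implies that every initial condition reaching X_T at time T for all θ in the support
of μθ satisfies w(x₀) ≥ 1. -/
theorem stmt_6 {n : ℕ} {Θ : Type*}
    [MetricSpace Θ] [CompactSpace Θ] [MeasurableSpace Θ] [BorelSpace Θ]
    (f : EuclideanSpace ℝ (Fin n) → Θ → EuclideanSpace ℝ (Fin n))
    (μθ : Measure Θ) [IsProbabilityMeasure μθ]
    (T : ℝ) (hT : 0 < T) (XT : Set (EuclideanSpace ℝ (Fin n)))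
    (v : ℝ → EuclideanSpace ℝ (Fin n) → Θ → ℝ)
    (hvC : Continuous fun p : (ℝ × EuclideanSpace ℝ (Fin n)) × Θ => v p.1.1 p.1.2 p.2)
    (hv : ∀ θ, ContDiff ℝ 1 fun p : ℝ × EuclideanSpace ℝ (Fin n) => v p.1 p.2 θ)
    (w : EuclideanSpace ℝ (Fin n) → ℝ) (hw : Continuous w) (q : ℝ)
    (hi : ∀ y ∈ XT, ∀ θ, v T y θ + q ≥ 0)
    (hii : ∀ t ∈ Set.Icc (0 : ℝ) T, ∀ y θ,
      fderiv ℝ (fun p : ℝ × EuclideanSpace ℝ (Fin n) => v p.1 p.2 θ) (t, y) (1, f y θ) ≤ 0)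
    (hiii : ∀ y, w y - (∫ θ, v 0 y θ ∂μθ) - q ≥ 1)
    (x₀ : EuclideanSpace ℝ (Fin n))
    (hreach : ∀ θ ∈ measureSupport μθ, ∃ x : ℝ → EuclideanSpace ℝ (Fin n),
      x 0 = x₀ ∧ (∀ t, HasDerivAt x (f (x t) θ) t) ∧ x T ∈ XT) :
    w x₀ ≥ 1 :=
  stmt_6_general f μθ T hT XT v hvC hv w q hi hii hiii x₀ hreach
end
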